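/- arXiv:2103.13707 — 7 statements merged into one kernel-verified Lean document; each statement's English description precedes it below -/
import Mathlib

section
/- Let A be a commutative Noetherian regular local ring of Krull dimension at most 2, and let M be a finitely generated reflexive A-module. Then M is a free A-module. -/
/-!
A regular local ring is a domain: for `x ∈ 𝔪 \ 𝔪²` outside the minimal primes, `A ⧸ (x)` is
regular of one dimension less, hence a domain by induction; so `(x)` is prime, and a minimal prime
`p ⊆ (x)` satisfies `p = x p`, hence vanishes by Nakayama.

If moreover `dim A ≤ 2` and `A` is not a field, take `x ∈ 𝔪 \ 𝔪²`: then `A ⧸ (x)` is a regular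
local domain of dimension at most one, hence a PID. Reflexivity makes `M ⧸ xM` torsion-free over
it: if `r w = x m` with `r ∉ (x)`, then every functional maps `w` into `(x)`, so `f ↦ f(w) / x` is a
functional on `M*`, i.e. evaluation at some `w'`, and `w = x w'`. Hence `M ⧸ xM` is free, and since
`x` is `M`-regular, so is `M`.
-/

open Function

/-- A commutative Noetherian local ring is regular if its maximal ideal can be generated by
(Krull dimension of the ring) many elements. -/
def IsRegularLocal (A : Type*) [CommRing A] [IsLocalRing A] : Prop :=
  ∃ s : Finset A, Ideal.span (s : Set A) = IsLocalRing.maximalIdeal A ∧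
    (s.card : WithBot ℕ∞) = ringKrullDim A

open IsLocalRing Module

namespace IsLocalRing

variable {R : Type*} [CommRing R] [IsLocalRing R] [IsNoetherianRing R]

theorem exists_span_insert_eq_maximalIdeal {x : R} (hx : x ∈ maximalIdeal R)
    (hx2 : x ∉ maximalIdeal R ^ 2) :
    ∃ s : Set R, s.Finite ∧ s.ncard + 1 ≤ (maximalIdeal R).spanFinrank ∧
      Ideal.span (insert x s) = maximalIdeal R := by
  set v := (maximalIdeal R).toCotangent ⟨x, hx⟩
  have hv : v ≠ 0 := by rwa [Ne, Ideal.toCotangent_eq_zero]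
  have hli : LinearIndepOn (ResidueField R) id {v} := LinearIndepOn.singleton hv
  set S := hli.extend (Set.subset_univ _)
  let b : Basis S (ResidueField R) (CotangentSpace R) := .extend hli
  have hvS : v ∈ S := hli.subset_extend _ rfl
  have hSspan : Submodule.span (ResidueField R) S = ⊤ := by
    have := b.span_eq; rwa [Basis.range_extend] at this
  have hSfin : S.Finite := have := Module.Finite.finite_basis b; S.toFinite
  have hScard : S.ncard = (maximalIdeal R).spanFinrank := by
    rw [spanFinrank_maximalIdeal_eq_finrank_cotangentSpace, finrank_eq_nat_card_basis b,
      Nat.card_coe_set_eq]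
  have hσ := surjInv_eq (maximalIdeal R).toCotangent_surjective
  set T := surjInv (maximalIdeal R).toCotangent_surjective '' (S \ {v})
  refine ⟨Subtype.val '' T, (hSfin.sdiff.image _).image _, ?_, ?_⟩
  · calc (Subtype.val '' T).ncard + 1 ≤ (S \ {v}).ncard + 1 := by
          gcongr
          exact (Set.ncard_image_le (hSfin.sdiff.image _)).trans (Set.ncard_image_le hSfin.sdiff)
      _ = S.ncard := Set.ncard_sdiff_singleton_add_one hvS hSfin
      _ = _ := hScard
  · have hT : Submodule.span R (insert ⟨x, hx⟩ T) = ⊤ := by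
      rw [← CotangentSpace.span_image_eq_top_iff, Set.image_insert_eq, Set.image_image]
      simp only [hσ, Set.image_id']
      rw [Set.insert_sdiff_singleton, Set.insert_eq_of_mem hvS, hSspan]
    have := Submodule.span_image (s := insert ⟨x, hx⟩ T) (maximalIdeal R).subtype
    rwa [hT, Submodule.map_subtype_top, Submodule.coe_subtype, Set.image_insert_eq] at this

theorem spanFinrank_maximalIdeal_quotient_add_one_le {x : R} (hx : x ∈ maximalIdeal R)
    (hx2 : x ∉ maximalIdeal R ^ 2) [IsLocalRing (R ⧸ Ideal.span {x})] :
    (maximalIdeal (R ⧸ Ideal.span {x})).spanFinrank + 1 ≤ (maximalIdeal R).spanFinrank := by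
  obtain ⟨s, hs, hcard, hspan⟩ := exists_span_insert_eq_maximalIdeal hx hx2
  have hmax : maximalIdeal (R ⧸ Ideal.span {x}) = Ideal.span (Ideal.Quotient.mk _ '' s) := by
    rw [← map_maximalIdeal_of_surjective _ Ideal.Quotient.mk_surjective, ← hspan, Ideal.map_span,
      Set.image_insert_eq, Ideal.Quotient.eq_zero_iff_mem.mpr (Ideal.mem_span_singleton_self x),
      Ideal.span_insert_zero]
  calc _ ≤ s.ncard + 1 := by
        grw [hmax, Submodule.spanFinrank_span_le_ncard_of_finite (hs.image _),
          Set.ncard_image_le hs]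
    _ ≤ _ := hcard

theorem exists_mem_maximalIdeal_notMem_sq_notMem_minimalPrimes
    (h : maximalIdeal R ∉ minimalPrimes R) :
    ∃ x ∈ maximalIdeal R, x ∉ maximalIdeal R ^ 2 ∧ ∀ p ∈ minimalPrimes R, x ∉ p := by
  have hcover : ¬ (maximalIdeal R : Set R) ⊆
      ⋃ p ∈ insert (maximalIdeal R ^ 2) (minimalPrimes R), (p : Set R) := by
    intro hsub
    obtain ⟨p, hp | hp, hle⟩ := (Ideal.subset_union_prime_finite
      ((minimalPrimes.finite_of_isNoetherianRing R).insert _) (f := id)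
      (maximalIdeal R ^ 2) (maximalIdeal R ^ 2)
      fun p hp hp2 _ ↦ ((Set.mem_insert_iff.mp hp).resolve_left hp2).isPrime).mp hsub
    · have hbot : maximalIdeal R = ⊥ := isField_iff_maximalIdeal_eq.mp <|
        (maximalIdeal_sq_lt_maximalIdeal R).not_left.mp (hp ▸ hle).not_gt
      exact h (Ideal.height_eq_zero_iff.mp (by rw [hbot]; exact Ideal.height_bot))
    · exact h (le_antisymm (le_maximalIdeal hp.isPrime.ne_top) hle ▸ hp)
  simp only [Set.not_subset, Set.mem_iUnion, Set.mem_insert_iff, exists_prop, not_exists,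
    not_and, SetLike.mem_coe] at hcover
  obtain ⟨x, hx, hx'⟩ := hcover
  exact ⟨x, hx, hx' _ (.inl rfl), fun p hp ↦ hx' p (.inr hp)⟩

theorem isDomain_of_isPrime_span_singleton {x : R} (hx : x ∈ maximalIdeal R)
    [(Ideal.span {x}).IsPrime] (hmin : ∀ p ∈ minimalPrimes R, x ∉ p) : IsDomain R := by
  obtain ⟨p, hp, hpx⟩ := Ideal.exists_minimalPrimes_le (bot_le : ⊥ ≤ Ideal.span {x})
  have hp' : p.IsPrime := hp.1.1
  have hle : p ≤ maximalIdeal R • p := by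
    intro z hz
    obtain ⟨c, rfl⟩ := Ideal.mem_span_singleton'.mp (hpx hz)
    have hc : c ∈ p := (hp'.mem_or_mem hz).resolve_right (hmin p hp)
    rw [mul_comm]; exact Submodule.smul_mem_smul hx hc
  have hbot : p = ⊥ := Submodule.eq_bot_of_le_smul_of_le_jacobson_bot _ _
    (IsNoetherian.noetherian p) hle (maximalIdeal_le_jacobson ⊥)
  have : (⊥ : Ideal R).IsPrime := hbot ▸ hp'
  exact IsDomain.of_bot_isPrime R

end IsLocalRing

namespace IsRegularLocalRing

variable {R : Type*} [CommRing R] [IsRegularLocalRing R]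

theorem quotient_span_singleton {x : R} (hx : x ∈ maximalIdeal R)
    (hx2 : x ∉ maximalIdeal R ^ 2) :
    IsRegularLocalRing (R ⧸ Ideal.span {x}) ∧
      ringKrullDim (R ⧸ Ideal.span {x}) + 1 = ringKrullDim R := by
  have : Nontrivial (R ⧸ Ideal.span {x}) := Ideal.Quotient.nontrivial_iff.mpr <|
    ne_top_of_le_ne_top (maximalIdeal.isMaximal R).ne_top
      ((Ideal.span_singleton_le_iff_mem _).mpr hx)
  have : IsLocalRing (R ⧸ Ideal.span {x}) := .of_surjective' _ Ideal.Quotient.mk_surjective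
  have hle := spanFinrank_maximalIdeal_quotient_add_one_le hx hx2
  have hdim : ringKrullDim R ≤ ringKrullDim (R ⧸ Ideal.span {x}) + 1 := by
    have := ringKrullDim_le_ringKrullDim_quotient_add_card {x}
      (by simpa [ringJacobson_eq_maximalIdeal] using hx)
    rwa [Finset.coe_singleton, Finset.card_singleton, Nat.cast_one] at this
  have hB := ringKrullDim_le_spanFinrank_maximalIdeal (R ⧸ Ideal.span {x})
  have hR := IsRegularLocalRing.spanFinrank_maximalIdeal (R := R)
  have hle' : ((maximalIdeal (R ⧸ Ideal.span {x})).spanFinrank : WithBot ℕ∞) + 1 ≤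
      ringKrullDim R := by rw [← hR]; exact_mod_cast hle
  have hge := ENat.WithBot.add_le_add_natCast_right_iff.mp (hle'.trans hdim)
  exact ⟨.of_spanFinrank_maximalIdeal_le _ hge, le_antisymm (by grw [hB]; exact hle') hdim⟩

theorem isDomain : IsDomain R := by
  induction h : (maximalIdeal R).spanFinrank using Nat.strong_induction_on generalizing R with
  | _ n ih =>
  rcases Nat.eq_zero_or_pos n with rfl | hpos
  · have hbot := (Submodule.spanFinrank_eq_zero_iff_eq_bot
      (maximalIdeal R).fg_of_isNoetherianRing).mp h
    exact (isField_iff_maximalIdeal_eq.mpr hbot).isDomain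
  have hmin : maximalIdeal R ∉ minimalPrimes R := by
    intro hm
    have := maximalIdeal_height_eq_ringKrullDim (R := R)
    rw [Ideal.height_eq_zero_iff.mpr hm, ← IsRegularLocalRing.spanFinrank_maximalIdeal, h] at this
    norm_cast at this
    omega
  obtain ⟨x, hx, hx2, hxmin⟩ := exists_mem_maximalIdeal_notMem_sq_notMem_minimalPrimes hmin
  have := (quotient_span_singleton hx hx2).1
  have hlt := spanFinrank_maximalIdeal_quotient_add_one_le hx hx2
  have : IsDomain (R ⧸ Ideal.span {x}) := ih _ (by omega) rfl
  have := (Ideal.Quotient.isDomain_iff_prime _).mp this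
  exact isDomain_of_isPrime_span_singleton hx hxmin

theorem isPrincipalIdealRing (h : ringKrullDim R ≤ 1) : IsPrincipalIdealRing R := by
  have := IsRegularLocalRing.isDomain (R := R)
  have hm : (maximalIdeal R).IsPrincipal := by
    rw [← finrank_cotangentSpace_le_one_iff, ← spanFinrank_maximalIdeal_eq_finrank_cotangentSpace]
    rw [← IsRegularLocalRing.spanFinrank_maximalIdeal] at h
    exact_mod_cast h
  exact ((tfae_of_isNoetherianRing_of_isLocalRing_of_isDomain R).out 4 0).mp hm

end IsRegularLocalRing

namespace Module.IsReflexive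

variable {R M : Type*} [CommRing R] [IsDomain R] [AddCommGroup M] [Module R M] [IsReflexive R M]

theorem exists_eq_smul_of_forall_dual_mem_span {x : R} (hx : x ≠ 0) {w : M}
    (hw : ∀ f : Dual R M, f w ∈ Ideal.span {x}) : ∃ w', w = x • w' := by
  let e := LinearEquiv.toSpanNonzeroSingleton R R x hx
  let g : Dual R (Dual R M) := e.symm ∘ₗ (Dual.eval R M w).codRestrict (R ∙ x) hw
  refine ⟨(evalEquiv R M).symm g, (bijective_dual_eval R M).injective ?_⟩
  ext f
  have := LinearEquiv.toSpanNonzeroSingleton_symm_apply_smul R R x hx ⟨f w, hw f⟩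
  simp only [smul_eq_mul] at this
  simp [g, e, mul_comm x]
  exact this.symm

open Pointwise in
theorem isTorsionFree_quotSMulTop {x : R} (hx : x ≠ 0) [hp : (Ideal.span {x}).IsPrime] :
    IsTorsionFree (R ⧸ Ideal.span {x}) (QuotSMulTop x M) := by
  refine isTorsionFree_iff_smul_eq_zero.mpr fun c q hcq ↦
    or_iff_not_imp_left.mpr fun hc ↦ ?_
  obtain ⟨r, rfl⟩ := Ideal.Quotient.mk_surjective c
  obtain ⟨w, rfl⟩ := Submodule.Quotient.mk_surjective _ q
  have hr : r ∉ Ideal.span {x} := mt Ideal.Quotient.eq_zero_iff_mem.mpr hc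
  obtain ⟨m, -, hm⟩ := (Submodule.mem_smul_pointwise_iff_exists _ _ _).mp
    ((Submodule.Quotient.mk_eq_zero _).mp hcq)
  have hw (f : Dual R M) : f w ∈ Ideal.span {x} := by
    refine (hp.mem_or_mem (Ideal.mem_span_singleton'.mpr ⟨f m, ?_⟩)).resolve_left hr
    rw [mul_comm, ← smul_eq_mul, ← map_smul, hm, map_smul, smul_eq_mul]
  obtain ⟨w', rfl⟩ := exists_eq_smul_of_forall_dual_mem_span hx hw
  exact (Submodule.Quotient.mk_eq_zero _).mpr (Submodule.smul_mem_pointwise_smul _ _ _ trivial)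

end Module.IsReflexive

theorem IsRegularLocalRing.free_of_isReflexive_of_ringKrullDim_le_two {A M : Type*} [CommRing A]
    [IsRegularLocalRing A] (hdim : ringKrullDim A ≤ 2) [AddCommGroup M] [Module A M]
    [Module.Finite A M] [IsReflexive A M] : Module.Free A M := by
  by_cases hA : IsField A
  · let := hA.toField
    infer_instance
  obtain ⟨x, hx, hx2⟩ := SetLike.exists_of_lt ((maximalIdeal_sq_lt_maximalIdeal A).mpr hA)
  have hx0 : x ≠ 0 := by rintro rfl; exact hx2 (zero_mem _)
  have := IsRegularLocalRing.isDomain (R := A)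
  obtain ⟨hBreg, hdimB⟩ := IsRegularLocalRing.quotient_span_singleton hx hx2
  have hBdom := IsRegularLocalRing.isDomain (R := A ⧸ Ideal.span {x})
  have := IsRegularLocalRing.isPrincipalIdealRing (R := A ⧸ Ideal.span {x})
    (ENat.WithBot.add_le_add_natCast_right_iff.mp (hdimB.trans_le hdim))
  have := (Ideal.Quotient.isDomain_iff_prime _).mp hBdom
  have := IsReflexive.isTorsionFree_quotSMulTop hx0 (M := M)
  have := Module.finitePresentation_of_finite A M
  have := Module.Finite.of_restrictScalars_finite A (A ⧸ Ideal.span {x}) (QuotSMulTop x M)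
  exact (free_quotSMulTop_iff_free A M (maximalIdeal_le_jacobson _ hx)
    (IsSMulRegular.of_ne_zero hx0)).mp inferInstance

theorem IsRegularLocal.isRegularLocalRing {A : Type*} [CommRing A] [IsLocalRing A]
    [IsNoetherianRing A] (h : IsRegularLocal A) : IsRegularLocalRing A := by
  obtain ⟨s, hs, hcard⟩ := h
  refine .of_spanFinrank_maximalIdeal_le _ ?_
  rw [← hcard, ← hs, ← Set.ncard_coe_finset]
  exact_mod_cast Submodule.spanFinrank_span_le_ncard_of_finite s.finite_toSet

/-- Over a commutative Noetherian regular local ring of Krull dimension at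
most `2`, every finitely generated reflexive module is free. -/
theorem reflexive_free_of_dim_le_two
    (A : Type*) [CommRing A] [IsLocalRing A] [IsNoetherianRing A]
    (hreg : IsRegularLocal A) (hdim : ringKrullDim A ≤ 2)
    (M : Type*) [AddCommGroup M] [Module A M] [Module.Finite A M]
    (hrefl : Module.IsReflexive A M) :
    Module.Free A M := by
  have := hreg.isRegularLocalRing
  exact IsRegularLocalRing.free_of_isReflexive_of_ringKrullDim_le_two hdim
end

section
/- Let R be a commutative ring, let a, l ≥ 0 be integers, and let 0 → R^a →α R^{a+l} →β M → 0 be an exact sequence of R-modules. Then there exists a unique R-linear map Ψ : ⋀^l_R M → ⋀^{a+l}_R R^{a+l} such that Ψ(β(y₁) ∧ ⋯ ∧ β(y_l)) = α(e₁) ∧ ⋯ ∧ α(e_a) ∧ y₁ ∧ ⋯ ∧ y_l for all y₁, …, y_l ∈ R^{a+l}, where e₁, …, e_a denotes the standard basis of R^a. -/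
open Function

/-- The wedge product of `n` elements of `M`, as an element of the `n`-th exterior power
`⋀[R]^n M`. -/
noncomputable def wedge (R : Type*) [CommRing R] {M : Type*} [AddCommGroup M] [Module R M]
    (n : ℕ) (v : Fin n → M) : ⋀[R]^n M :=
  ⟨ExteriorAlgebra.ιMulti R n v, ExteriorAlgebra.ιMulti_range R n (Set.mem_range_self v)⟩

section Aux

variable {R : Type*} [CommRing R] {N P : Type*} [AddCommGroup N] [Module R N]
  [AddCommGroup P] [Module R P]

/-- An alternating map vanishes when one slot is a combination of the others. -/
lemma alt_update_combo {n : ℕ} (f : N [⋀^Fin n]→ₗ[R] P) (v : Fin n → N) (j : Fin n)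
    (c : Fin n → R) (hc : c j = 0) :
    f (Function.update v j (∑ i, c i • v i)) = 0 := by
  rw [f.map_update_sum]
  refine Finset.sum_eq_zero fun i _ => ?_
  show f (Function.update v j (c i • v i)) = 0
  rw [f.map_update_smul]
  rcases eq_or_ne i j with rfl | hij
  · rw [hc, zero_smul]
  · rw [f.map_eq_zero_of_eq (Function.update v j (v i)) (i := i) (j := j)
      (by rw [Function.update_of_ne hij, Function.update_self]) hij, smul_zero]

lemma fin_append_update {m n : ℕ} {α : Type*} (u : Fin m → α) (w : Fin n → α)
    [inst : DecidableEq (Fin n)] (j : Fin n) (z : α) :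
    Fin.append u (Function.update w j z) =
      Function.update (Fin.append u w) (Fin.natAdd m j) z := by
  funext k
  refine Fin.addCases (fun i => ?_) (fun i => ?_) k
  · rw [Fin.append_left, Function.update_of_ne (by simp [Fin.ext_iff]; omega), Fin.append_left]
  · rcases eq_or_ne i j with rfl | hij
    · rw [Fin.append_right, Function.update_self, Function.update_self]
    · rw [Fin.append_right, Function.update_of_ne hij,
        Function.update_of_ne (by simpa [Fin.ext_iff] using fun h => hij (Fin.ext h)),
        Fin.append_right]

variable {a l : ℕ} {M : Type*} [AddCommGroup M] [Module R M]

/-- The top wedge as an alternating map into the exterior power. -/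
noncomputable def bigWedge (R : Type*) [CommRing R] (n : ℕ) :
    (Fin n → R) [⋀^Fin n]→ₗ[R] ⋀[R]^n (Fin n → R) :=
  (ExteriorAlgebra.ιMulti R n).codRestrict _
    (fun v => ExteriorAlgebra.ιMulti_range R n (Set.mem_range_self v))

lemma wedge_eq_bigWedge (n : ℕ) (v : Fin n → (Fin n → R)) :
    wedge R n v = bigWedge R n v := rfl

variable (α : (Fin a → R) →ₗ[R] (Fin (a + l) → R)) (β : (Fin (a + l) → R) →ₗ[R] M)

/-- Key vanishing: if one of the last `l` slots lies in the range of `α`,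
the big wedge with the `α eᵢ` prefix vanishes. -/
lemma bigWedge_update_alpha (y : Fin l → (Fin (a + l) → R)) (j : Fin l) (x : Fin a → R) :
    bigWedge R (a + l)
      (Function.update (Fin.append (fun i : Fin a => α (Pi.single i 1)) y)
        (Fin.natAdd a j) (α x)) = 0 := by
  set v := Fin.append (fun i : Fin a => α (Pi.single i 1)) y with hv
  have hx : α x = ∑ k : Fin (a + l), Fin.append x (0 : Fin l → R) k • v k := by
    rw [Fin.sum_univ_add]
    simp only [Fin.append_left, Fin.append_right, Pi.zero_apply, zero_smul,
      Finset.sum_const_zero, add_zero, hv]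
    have h1 : ∀ i : Fin a, x i • α (Pi.single i (1 : R)) = α (Pi.single i (x i)) := by
      intro i; rw [← map_smul, ← Pi.single_smul, smul_eq_mul, mul_one]
    simp_rw [h1, ← map_sum]
    congr 1
    exact (Finset.univ_sum_single x).symm
  rw [hx]
  exact alt_update_combo _ v (Fin.natAdd a j) (Fin.append x 0)
    (by rw [Fin.append_right]; rfl)

variable (hαβ : Function.Exact α β)

include hαβ in
/-- Replacing one of the last `l` slots by another vector with the same image under `β`. -/
lemma bigWedge_update_congr [inst : DecidableEq (Fin l)] (y : Fin l → (Fin (a + l) → R))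
    (j : Fin l) (z z' : Fin (a + l) → R) (h : β z = β z') :
    bigWedge R (a + l) (Fin.append (fun i : Fin a => α (Pi.single i 1)) (Function.update y j z)) =
    bigWedge R (a + l)
      (Fin.append (fun i : Fin a => α (Pi.single i 1)) (Function.update y j z')) := by
  obtain ⟨x, hx⟩ := (hαβ (z - z')).mp (by rw [map_sub, h, sub_self])
  have hz : z = z' + α x := by rw [hx]; abel
  rw [hz, fin_append_update, fin_append_update,
    (bigWedge R (a + l)).map_update_add]
  have := bigWedge_update_alpha α (Function.update y j z') j x
  rw [fin_append_update, Function.update_idem] at this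
  rw [this, add_zero]

include hαβ in
/-- Replacing all of the last `l` slots by vectors with the same images under `β`. -/
lemma bigWedge_congr [inst : DecidableEq (Fin l)] (y y' : Fin l → (Fin (a + l) → R))
    (h : ∀ i, β (y i) = β (y' i)) :
    bigWedge R (a + l) (Fin.append (fun i : Fin a => α (Pi.single i 1)) y) =
    bigWedge R (a + l) (Fin.append (fun i : Fin a => α (Pi.single i 1)) y') := by
  have key : ∀ s : Finset (Fin l), ∀ y y' : Fin l → (Fin (a + l) → R),
      (∀ i, β (y i) = β (y' i)) → (∀ i ∉ s, y i = y' i) →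
      bigWedge R (a + l) (Fin.append (fun i : Fin a => α (Pi.single i 1)) y) =
      bigWedge R (a + l) (Fin.append (fun i : Fin a => α (Pi.single i 1)) y') := by
    intro s
    induction s using Finset.induction_on with
    | empty =>
      intro y y' _ h2
      have : y = y' := funext fun i => h2 i (Finset.notMem_empty i)
      rw [this]
    | @insert k s hk ih =>
      intro y y' h1 h2
      calc bigWedge R (a + l) (Fin.append (fun i : Fin a => α (Pi.single i 1)) y)
          = bigWedge R (a + l) (Fin.append (fun i : Fin a => α (Pi.single i 1))
            (Function.update y k (y k))) := by rw [Function.update_eq_self]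
        _ = bigWedge R (a + l) (Fin.append (fun i : Fin a => α (Pi.single i 1))
            (Function.update y k (y' k))) :=
            bigWedge_update_congr α β hαβ y k (y k) (y' k) (h1 k)
        _ = bigWedge R (a + l) (Fin.append (fun i : Fin a => α (Pi.single i 1)) y') := by
            refine ih (Function.update y k (y' k)) y' (fun i => ?_) (fun i hi => ?_)
            · rcases eq_or_ne i k with rfl | hik
              · rw [Function.update_self]
              · rw [Function.update_of_ne hik]; exact h1 i
            · rcases eq_or_ne i k with rfl | hik
              · rw [Function.update_self]
              · rw [Function.update_of_ne hik]
                exact h2 i (by simp [Finset.mem_insert, hik, hi])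
  exact key Finset.univ y y' h (fun i hi => absurd (Finset.mem_univ i) hi)

variable (hβ : Function.Surjective β)

/-- The descended alternating map `M^l → ⋀^{a+l} R^{a+l}`. -/
noncomputable def descAlt : M [⋀^Fin l]→ₗ[R] ⋀[R]^(a + l) (Fin (a + l) → R) where
  toFun m := bigWedge R (a + l)
    (Fin.append (fun i : Fin a => α (Pi.single i 1)) (fun i => surjInv hβ (m i)))
  map_update_add' := by
    intro inst m i x₁ x₂
    show bigWedge R (a + l) (Fin.append (fun i : Fin a => α (Pi.single i 1))
        (fun j => surjInv hβ (Function.update m i (x₁ + x₂) j))) =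
      bigWedge R (a + l) (Fin.append (fun i : Fin a => α (Pi.single i 1))
        (fun j => surjInv hβ (Function.update m i x₁ j))) +
      bigWedge R (a + l) (Fin.append (fun i : Fin a => α (Pi.single i 1))
        (fun j => surjInv hβ (Function.update m i x₂ j)))
    have hcomp : ∀ z : M, (fun j => surjInv hβ (Function.update m i z j)) =
        Function.update (fun j => surjInv hβ (m j)) i (surjInv hβ z) := by
      intro z; funext j
      rcases eq_or_ne j i with rfl | hji
      · rw [Function.update_self, Function.update_self]
      · rw [Function.update_of_ne hji, Function.update_of_ne hji]
    rw [hcomp, hcomp, hcomp]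
    rw [bigWedge_update_congr α β hαβ _ i (surjInv hβ (x₁ + x₂))
      (surjInv hβ x₁ + surjInv hβ x₂)
      (by rw [map_add, surjInv_eq hβ, surjInv_eq hβ, surjInv_eq hβ]),
      fin_append_update, fin_append_update, fin_append_update,
      (bigWedge R (a + l)).map_update_add]
  map_update_smul' := by
    intro inst m i c x
    show bigWedge R (a + l) (Fin.append (fun i : Fin a => α (Pi.single i 1))
        (fun j => surjInv hβ (Function.update m i (c • x) j))) =
      c • bigWedge R (a + l) (Fin.append (fun i : Fin a => α (Pi.single i 1))
        (fun j => surjInv hβ (Function.update m i x j)))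
    have hcomp : ∀ z : M, (fun j => surjInv hβ (Function.update m i z j)) =
        Function.update (fun j => surjInv hβ (m j)) i (surjInv hβ z) := by
      intro z; funext j
      rcases eq_or_ne j i with rfl | hji
      · rw [Function.update_self, Function.update_self]
      · rw [Function.update_of_ne hji, Function.update_of_ne hji]
    rw [hcomp, hcomp]
    rw [bigWedge_update_congr α β hαβ _ i (surjInv hβ (c • x)) (c • surjInv hβ x)
      (by rw [map_smul, surjInv_eq hβ, surjInv_eq hβ]),
      fin_append_update, fin_append_update,
      (bigWedge R (a + l)).map_update_smul]
  map_eq_zero_of_eq' := by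
    intro v i j hveq hij
    show bigWedge R (a + l) (Fin.append (fun i : Fin a => α (Pi.single i 1))
        (fun k => surjInv hβ (v k))) = 0
    refine (bigWedge R (a + l)).map_eq_zero_of_eq _
      (i := Fin.natAdd a i) (j := Fin.natAdd a j) ?_ ?_
    · rw [Fin.append_right, Fin.append_right, hveq]
    · simp only [ne_eq, Fin.ext_iff, Fin.coe_natAdd]
      intro h
      exact hij (Fin.ext (by omega))

end Aux

/-- Given an exact sequence `0 → R^a → R^{a+l} → M → 0`, there is a unique
`R`-linear map `Ψ : ⋀^l M → ⋀^{a+l} R^{a+l}` with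
`Ψ(β y₁ ∧ ⋯ ∧ β y_l) = α e₁ ∧ ⋯ ∧ α e_a ∧ y₁ ∧ ⋯ ∧ y_l`. -/
theorem exists_unique_wedge_lift
    (R : Type*) [CommRing R] (a l : ℕ)
    (M : Type*) [AddCommGroup M] [Module R M]
    (α : (Fin a → R) →ₗ[R] (Fin (a + l) → R)) (β : (Fin (a + l) → R) →ₗ[R] M)
    (hα : Function.Injective α) (hαβ : Function.Exact α β) (hβ : Function.Surjective β) :
    ∃! Ψ : (⋀[R]^l M) →ₗ[R] (⋀[R]^(a + l) (Fin (a + l) → R)),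
      ∀ y : Fin l → (Fin (a + l) → R),
        Ψ (wedge R l (fun i => β (y i))) =
          wedge R (a + l) (Fin.append (fun i : Fin a => α (Pi.single i 1)) y) := by
  classical
  set f : M [⋀^Fin l]→ₗ[R] ⋀[R]^(a + l) (Fin (a + l) → R) := descAlt α β hαβ hβ with hf
  set fam : ∀ i : ℕ, M [⋀^Fin i]→ₗ[R] ⋀[R]^(a + l) (Fin (a + l) → R) :=
    Function.update (fun _ => 0) l f with hfam
  set Ψ : (⋀[R]^l M) →ₗ[R] (⋀[R]^(a + l) (Fin (a + l) → R)) :=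
    (ExteriorAlgebra.liftAlternating fam).comp (Submodule.subtype _) with hΨdef
  have hΨwedge : ∀ v : Fin l → M,
      Ψ (wedge R l v) = f v := by
    intro v
    have : Ψ (wedge R l v) =
        ExteriorAlgebra.liftAlternating fam (ExteriorAlgebra.ιMulti R l v) := rfl
    rw [this, ExteriorAlgebra.liftAlternating_apply_ιMulti, hfam, Function.update_self]
  have hΨprop : ∀ y : Fin l → (Fin (a + l) → R),
      Ψ (wedge R l (fun i => β (y i))) =
        wedge R (a + l) (Fin.append (fun i : Fin a => α (Pi.single i 1)) y) := by
    intro y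
    rw [hΨwedge]
    show bigWedge R (a + l) (Fin.append (fun i : Fin a => α (Pi.single i 1))
      (fun i => surjInv hβ (β (y i)))) = _
    rw [wedge_eq_bigWedge]
    exact bigWedge_congr α β hαβ _ y (fun i => by rw [surjInv_eq hβ])
  refine ⟨Ψ, hΨprop, ?_⟩
  intro Ψ' hΨ'
  have key : ∀ z ∈ Submodule.span R (Set.range (ExteriorAlgebra.ιMulti R l (M := M))),
      ∀ hz : z ∈ ⋀[R]^l M, Ψ' ⟨z, hz⟩ = Ψ ⟨z, hz⟩ := by
    intro z hzspan
    induction hzspan using Submodule.span_induction with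
    | mem z hzmem =>
      intro hz
      obtain ⟨v, rfl⟩ := hzmem
      have hsub : (⟨ExteriorAlgebra.ιMulti R l v, hz⟩ : ⋀[R]^l M) = wedge R l v :=
        Subtype.ext rfl
      have hv : v = fun i => β (surjInv hβ (v i)) := by
        funext i; rw [surjInv_eq hβ]
      rw [hsub]
      conv_lhs => rw [hv]
      conv_rhs => rw [hv]
      rw [hΨ' (fun i => surjInv hβ (v i)), hΨprop (fun i => surjInv hβ (v i))]
    | zero =>
      intro hz
      have : (⟨0, hz⟩ : ⋀[R]^l M) = 0 := Subtype.ext rfl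
      rw [this, map_zero, map_zero]
    | add z₁ z₂ h₁span h₂span ih₁ ih₂ =>
      intro hz
      have h₁ : z₁ ∈ ⋀[R]^l M := by
        rw [← ExteriorAlgebra.ιMulti_span_fixedDegree]; exact h₁span
      have h₂ : z₂ ∈ ⋀[R]^l M := by
        rw [← ExteriorAlgebra.ιMulti_span_fixedDegree]; exact h₂span
      have : (⟨z₁ + z₂, hz⟩ : ⋀[R]^l M) = ⟨z₁, h₁⟩ + ⟨z₂, h₂⟩ := Subtype.ext rfl
      rw [this, map_add, map_add, ih₁ h₁, ih₂ h₂]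
    | smul c z₁ h₁span ih =>
      intro hz
      have h₁ : z₁ ∈ ⋀[R]^l M := by
        rw [← ExteriorAlgebra.ιMulti_span_fixedDegree]; exact h₁span
      have : (⟨c • z₁, hz⟩ : ⋀[R]^l M) = c • ⟨z₁, h₁⟩ := Subtype.ext rfl
      rw [this, map_smul, map_smul, ih h₁]
  refine LinearMap.ext ?_
  rintro ⟨z, hz⟩
  exact key z (by rw [ExteriorAlgebra.ιMulti_span_fixedDegree]; exact hz) hz
end

section
/- Let Λ be a commutative Noetherian regular local ring and R a commutative Λ-algebra that is free of finite rank as a Λ-module and admits an isomorphism of R-modules Hom_Λ(R, Λ) ≅ R. Let 0 → R^a →α R^{a+l} →β M → 0 be an exact sequence of R-modules and let Ψ : ⋀^l_R M → ⋀^{a+l}_R R^{a+l} be the unique R-linear map with Ψ(β(y₁) ∧ ⋯ ∧ β(y_l)) = α(e₁) ∧ ⋯ ∧ α(e_a) ∧ y₁ ∧ ⋯ ∧ y_l for all y₁, …, y_l ∈ R^{a+l} (e₁, …, e_a the standard basis of R^a). Then the kernel of Ψ equals the torsion submodule of ⋀^l_R M, i.e., the submodule of elements annihilated by some non-zero-divisor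 of R. -/
/-
Since `α` is injective and `R` is Noetherian, McCoy's theorem together with prime avoidance over
the finitely many associated primes of `R` yields a non-zero-divisor `d` in the ideal of maximal
minors of `α`, and the adjugates of those minors assemble to a map `π` with `π ∘ α = d`.
Contracting successively by the coordinates of `π` and then applying `⋀ β` gives a map `Θ`
with `Θ ∘ Ψ = d ^ a`, because `β` kills every `α eᵢ`; so `ker Ψ` is torsion. Conversely,
`⋀^{a+l} R^{a+l}` is free, hence torsion-free, so `Ψ` kills the torsion.
-/

open Function

theorem coe_wedge {R : Type*} [CommRing R] {M : Type*} [AddCommGroup M] [Module R M] (n : ℕ)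
    (v : Fin n → M) : (wedge R n v : ExteriorAlgebra R M) = ExteriorAlgebra.ιMulti R n v := rfl

open scoped nonZeroDivisors

section

variable {R : Type*} [CommRing R]

namespace Matrix

theorem det_submatrix_snoc {m n : Type*} {r : ℕ} (A : Matrix m n R) (f : Fin r → m) (i : m)
    (g : Fin (r + 1) → n) :
    (A.submatrix (Fin.snoc f i) g).det =
      ∑ j, A i (g j) * ((-1) ^ (r + j : ℕ) * (A.submatrix f (g ∘ j.succAbove)).det) := by
  rw [det_succ_row _ (Fin.last r)]
  refine Finset.sum_congr rfl fun j _ => ?_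
  simp only [submatrix_apply, Fin.snoc_last, Fin.val_last, submatrix_submatrix,
    Fin.succAbove_last]
  rw [Fin.snoc_comp_castSucc]
  ring

theorem injective_of_mul_det_submatrix_ne_zero {m n : Type*} {r : ℕ} {A : Matrix m n R} {c : R}
    {f : Fin r → m} {g : Fin r → n} (h : c * (A.submatrix f g).det ≠ 0) : Injective g := by
  intro j k hjk
  by_contra hne
  exact h (by rw [det_zero_of_column_eq hne fun i => by simp [hjk], mul_zero])

variable {m n : ℕ} {A : Matrix (Fin m) (Fin n) R}

theorem exists_mul_det_submatrix_succ_ne_zero (hA : Injective A.mulVec) {r : ℕ} (hr : r < n)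
    {c : R} {f : Fin r → Fin m} {g : Fin r → Fin n} (h : c * (A.submatrix f g).det ≠ 0) :
    ∃ (f' : Fin (r + 1) → Fin m) (g' : Fin (r + 1) → Fin n), c * (A.submatrix f' g').det ≠ 0 := by
  have hg := injective_of_mul_det_submatrix_ne_zero h
  obtain ⟨j₀, hj₀⟩ : ∃ j₀, j₀ ∉ Set.range g := by
    by_contra! hsurj
    have := Fintype.card_le_of_surjective g hsurj
    simp only [Fintype.card_fin] at this
    omega
  set g' : Fin (r + 1) → Fin n := Fin.snoc g j₀
  have hg' : Injective g' := Fin.snoc_injective_of_injective hg hj₀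
  by_contra! hmax
  -- Expanding the `(r+1)`-minors along an extra row `i` gives a kernel vector of `A`.
  set w : Fin (r + 1) → R :=
    fun j => c * ((-1) ^ (r + j : ℕ) * (A.submatrix f (g' ∘ j.succAbove)).det)
  set v : Fin n → R := ∑ j, w j • Pi.single (g' j) 1
  have hv : A *ᵥ v = 0 := by
    ext i
    have := hmax (Fin.snoc f i) g'
    rw [det_submatrix_snoc, Finset.mul_sum] at this
    simp only [v, mulVec_sum, mulVec_smul, mulVec_single, Finset.sum_apply, Pi.smul_apply,
      smul_eq_mul, Pi.zero_apply, col_apply, MulOpposite.op_one, one_smul]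
    rw [← this]
    exact Finset.sum_congr rfl fun j _ => by ring
  have hv_last : v (g' (Fin.last r)) = c * (A.submatrix f g).det := by
    simp only [v, Finset.sum_apply, Pi.smul_apply, Pi.single_apply, hg'.eq_iff, smul_eq_mul,
      mul_ite, mul_one, mul_zero, Finset.sum_ite_eq, Finset.mem_univ, if_true, w,
      Fin.succAbove_last, Fin.val_last, ← two_mul, pow_mul, neg_one_sq, one_pow, one_mul, g',
      Fin.snoc_comp_castSucc]
  exact h (hv_last ▸ congrFun (hA (hv.trans (mulVec_zero A).symm)) _)

/-- McCoy's theorem. -/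
theorem eq_zero_of_forall_mul_det_submatrix_eq_zero (hA : Injective A.mulVec) {c : R}
    (hc : ∀ f : Fin n → Fin m, c * (A.submatrix f id).det = 0) : c = 0 := by
  by_contra hc₀
  have key : ∀ r ≤ n, ∃ (f : Fin r → Fin m) (g : Fin r → Fin n),
      c * (A.submatrix f g).det ≠ 0 := by
    intro r hr
    induction r with
    | zero => exact ⟨finZeroElim, finZeroElim, by simpa [det_isEmpty] using hc₀⟩
    | succ r ih =>
      obtain ⟨f, g, h⟩ := ih (by omega)
      exact exists_mul_det_submatrix_succ_ne_zero hA (by omega) h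
  obtain ⟨f, g, h⟩ := key n le_rfl
  set σ := Equiv.ofBijective g (Finite.injective_iff_bijective.mp
    (injective_of_mul_det_submatrix_ne_zero h))
  have : A.submatrix f g = (A.submatrix f id).submatrix id σ := rfl
  rw [this, det_permute', mul_left_comm, hc f, mul_zero] at h
  exact h rfl

theorem exists_mem_nonZeroDivisors_mem_span_det_submatrix [IsNoetherianRing R]
    (hA : Injective A.mulVec) :
    ∃ d ∈ R⁰, d ∈ Ideal.span (Set.range fun f : Fin n → Fin m => (A.submatrix f id).det) := by
  by_contra! h
  obtain ⟨x, hx, hx₀⟩ := SetLike.exists_of_lt <|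
    Ideal.bot_lt_annihilator_of_disjoint_nonZeroDivisors <|
      Set.disjoint_left.mpr fun d hd hd' => h d hd' hd
  refine hx₀ (eq_zero_of_forall_mul_det_submatrix_eq_zero hA fun f => ?_)
  have := Module.mem_annihilator.mp hx ⟨_, Ideal.subset_span ⟨f, rfl⟩⟩
  simpa using congrArg Subtype.val this

theorem exists_mul_eq_smul_one_of_mem_span_det_submatrix {d : R}
    (hd : d ∈ Ideal.span (Set.range fun f : Fin n → Fin m => (A.submatrix f id).det)) :
    ∃ B : Matrix (Fin n) (Fin m) R, B * A = d • 1 := by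
  obtain ⟨c, hc⟩ := (Ideal.mem_span_range_iff_exists_fun).mp hd
  refine ⟨∑ f, c f •
    ((A.submatrix f id).adjugate * (1 : Matrix (Fin m) (Fin m) R).submatrix f id), ?_⟩
  have hsel (f : Fin n → Fin m) : (1 : Matrix (Fin m) (Fin m) R).submatrix f id * A =
      A.submatrix f id := one_submatrix_mul f (Equiv.refl _) A
  simp only [Matrix.sum_mul, Matrix.smul_mul, Matrix.mul_assoc, hsel, adjugate_mul, smul_smul,
    ← Finset.sum_smul, hc]

end Matrix

theorem LinearMap.exists_comp_eq_smul_id_of_injective [IsNoetherianRing R] {m n : ℕ}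
    {α : (Fin n → R) →ₗ[R] (Fin m → R)} (hα : Injective α) :
    ∃ d ∈ R⁰, ∃ π : (Fin m → R) →ₗ[R] (Fin n → R), π ∘ₗ α = d • LinearMap.id := by
  set A := LinearMap.toMatrix' α
  have hA : Injective A.mulVec := funext (LinearMap.toMatrix'_mulVec α) ▸ hα
  obtain ⟨d, hd, hspan⟩ := Matrix.exists_mem_nonZeroDivisors_mem_span_det_submatrix hA
  obtain ⟨B, hB⟩ := Matrix.exists_mul_eq_smul_one_of_mem_span_det_submatrix hspan
  refine ⟨d, hd, Matrix.toLin' B, ?_⟩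
  calc Matrix.toLin' B ∘ₗ α = Matrix.toLin' B ∘ₗ Matrix.toLin' A := by
        rw [Matrix.toLin'_toMatrix']
    _ = d • LinearMap.id := by rw [← Matrix.toLin'_mul, hB, map_smul, Matrix.toLin'_one]

namespace ExteriorAlgebra

variable {N M : Type*} [AddCommGroup N] [Module R N] [AddCommGroup M] [Module R M]

theorem ιMulti_append {m n : ℕ} (u : Fin m → N) (v : Fin n → N) :
    ιMulti R (m + n) (Fin.append u v) = ιMulti R m u * ιMulti R n v := by
  simp only [ιMulti_apply]
  rw [List.ofFn_add, List.prod_append]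
  simp only [Fin.append_left', Fin.append_right]

noncomputable def contractLeftIter : {k : ℕ} → (Fin k → Module.Dual R N) →
    ExteriorAlgebra R N →ₗ[R] ExteriorAlgebra R N
  | 0, _ => LinearMap.id
  | _ + 1, p => contractLeftIter (Fin.tail p) ∘ₗ CliffordAlgebra.contractLeft (p 0)

theorem contractLeftIter_ι_mul {k : ℕ} (p : Fin k → Module.Dual R N) {x : N}
    (hx : ∀ i, p i x = 0) (z : ExteriorAlgebra R N) :
    contractLeftIter p (ι R x * z) = (-1 : R) ^ k • (ι R x * contractLeftIter p z) := by
  induction k generalizing z with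
  | zero => simp [contractLeftIter]
  | succ k ih =>
    simp only [contractLeftIter, LinearMap.comp_apply, CliffordAlgebra.contractLeft_ι_mul, hx 0,
      zero_smul, zero_sub, map_neg]
    rw [ih (Fin.tail p) (fun i => hx i.succ), pow_succ, mul_neg_one, neg_smul]

theorem map_contractLeftIter_ιMulti_mul {k : ℕ} (f : N →ₗ[R] M) (p : Fin k → Module.Dual R N)
    (u : Fin k → N) (d : R) (hf : ∀ j, f (u j) = 0)
    (hpu : ∀ i j, p i (u j) = if i = j then d else 0) (w : ExteriorAlgebra R N) :
    map f (contractLeftIter p (ιMulti R k u * w)) = d ^ k • map f w := by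
  induction k generalizing w with
  | zero => simp [contractLeftIter]
  | succ k ih =>
    have hp0 : p 0 (u 0) = d := by simp [hpu]
    have htail : ∀ i, Fin.tail p i (u 0) = 0 := fun i => by simp [Fin.tail, hpu, Fin.succ_ne_zero]
    simp only [ιMulti_succ_apply, mul_assoc, contractLeftIter, LinearMap.comp_apply,
      CliffordAlgebra.contractLeft_ι_mul, hp0, map_sub, map_smul]
    rw [contractLeftIter_ι_mul _ htail, map_smul, map_mul (map f), map_apply_ι, hf, map_zero,
      zero_mul, smul_zero, sub_zero, ih (Fin.tail p) (Matrix.vecTail u) (fun j => hf j.succ)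
      (fun i j => by simp [Fin.tail, Matrix.vecTail, hpu]), smul_smul, pow_succ']

end ExteriorAlgebra

theorem Submodule.torsion_le_ker_of_flat {N P : Type*} [AddCommGroup N] [Module R N]
    [AddCommGroup P] [Module R P] [Module.Flat R P] (f : N →ₗ[R] P) :
    torsion R N ≤ LinearMap.ker f := by
  rintro x ⟨r, hr⟩
  refine Module.Flat.isSMulRegular_of_nonZeroDivisors r.2 ?_
  simp only [← map_smul, Submonoid.smul_def] at hr ⊢
  simp [hr]

theorem LinearMap.ker_le_torsion_of_comp_eq_smul {N P Q : Type*} [AddCommGroup N] [Module R N]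
    [AddCommGroup P] [Module R P] [AddCommGroup Q] [Module R Q] {f : N →ₗ[R] P} (g : P →ₗ[R] Q)
    {i : N →ₗ[R] Q} (hi : Injective i) {r : R} (hr : r ∈ R⁰) (hgf : g ∘ₗ f = r • i) :
    ker f ≤ Submodule.torsion R N := by
  intro x hx
  refine ⟨⟨r, hr⟩, hi ?_⟩
  simpa [LinearMap.mem_ker.mp hx] using (LinearMap.congr_fun hgf x).symm

end

theorem ker_wedge_lift_eq_torsion_general
    (Λ : Type*) [CommRing Λ] [IsNoetherianRing Λ]
    (R : Type*) [CommRing R] [Algebra Λ R] [Module.Finite Λ R]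
    (a l : ℕ) (M : Type*) [AddCommGroup M] [Module R M]
    (α : (Fin a → R) →ₗ[R] (Fin (a + l) → R)) (β : (Fin (a + l) → R) →ₗ[R] M)
    (hα : Function.Injective α) (hαβ : Function.Exact α β) (hβ : Function.Surjective β)
    (Ψ : (⋀[R]^l M) →ₗ[R] (⋀[R]^(a + l) (Fin (a + l) → R)))
    (hΨ : ∀ y : Fin l → (Fin (a + l) → R),
      Ψ (wedge R l (fun i => β (y i))) =
        wedge R (a + l) (Fin.append (fun i : Fin a => α (Pi.single i 1)) y)) :
    LinearMap.ker Ψ = Submodule.torsion R (⋀[R]^l M) := by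
  have : IsNoetherianRing R := Algebra.FiniteType.isNoetherianRing Λ R
  obtain ⟨d, hd, π, hπ⟩ := LinearMap.exists_comp_eq_smul_id_of_injective hα
  have hβα (j : Fin a) : β (α (Pi.single j 1)) = 0 := hαβ.apply_apply_eq_zero _
  have hπα (i j : Fin a) :
      (LinearMap.proj i ∘ₗ π) (α (Pi.single j 1)) = if i = j then d else 0 := by
    simp [← LinearMap.comp_apply (f := π), hπ, Pi.single_apply]
  have hΘΨ : ((ExteriorAlgebra.map β).toLinearMap ∘ₗ
      ExteriorAlgebra.contractLeftIter (fun i => LinearMap.proj i ∘ₗ π) ∘ₗ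
        Submodule.subtype _) ∘ₗ Ψ = d ^ a • Submodule.subtype _ := by
    refine exteriorPower.linearMap_ext (AlternatingMap.ext fun m => ?_)
    obtain ⟨y, rfl⟩ := hβ.comp_left m
    change ExteriorAlgebra.map β (ExteriorAlgebra.contractLeftIter _
      (Ψ (wedge R l fun i => β (y i)) : ExteriorAlgebra R _)) =
        d ^ a • ExteriorAlgebra.ιMulti R l (β ∘ y)
    rw [hΨ y, coe_wedge, ExteriorAlgebra.ιMulti_append,
      ExteriorAlgebra.map_contractLeftIter_ιMulti_mul β _ _ d hβα hπα,
      ExteriorAlgebra.map_apply_ιMulti]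
  exact le_antisymm
    (LinearMap.ker_le_torsion_of_comp_eq_smul _ (Submodule.injective_subtype _) (pow_mem hd a) hΘΨ)
    (Submodule.torsion_le_ker_of_flat Ψ)

/-- In the Gorenstein setting, the kernel of the canonical map
`Ψ : ⋀^l M → ⋀^{a+l} R^{a+l}` is exactly the torsion submodule of `⋀^l M`. -/
theorem ker_wedge_lift_eq_torsion
    (Λ : Type*) [CommRing Λ] [IsLocalRing Λ] [IsNoetherianRing Λ] (hΛ : IsRegularLocal Λ)
    (R : Type*) [CommRing R] [Algebra Λ R] [Module.Free Λ R] [Module.Finite Λ R]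
    (hGor : ∃ φ : R ≃ₗ[Λ] (R →ₗ[Λ] Λ), ∀ r s x : R, φ (r * s) x = φ s (r * x))
    (a l : ℕ) (M : Type*) [AddCommGroup M] [Module R M]
    (α : (Fin a → R) →ₗ[R] (Fin (a + l) → R)) (β : (Fin (a + l) → R) →ₗ[R] M)
    (hα : Function.Injective α) (hαβ : Function.Exact α β) (hβ : Function.Surjective β)
    (Ψ : (⋀[R]^l M) →ₗ[R] (⋀[R]^(a + l) (Fin (a + l) → R)))
    (hΨ : ∀ y : Fin l → (Fin (a + l) → R),
      Ψ (wedge R l (fun i => β (y i))) =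
        wedge R (a + l) (Fin.append (fun i : Fin a => α (Pi.single i 1)) y)) :
    LinearMap.ker Ψ = Submodule.torsion R (⋀[R]^l M) :=
  ker_wedge_lift_eq_torsion_general Λ R a l M α β hα hαβ hβ Ψ hΨ
end

section
/- Let R be a commutative ring and let 0 → R^a →α R^{a+l} →β M → 0 be an exact sequence of R-modules. Let Ψ : ⋀^l_R M → ⋀^{a+l}_R R^{a+l} be the unique R-linear map with Ψ(β(y₁) ∧ ⋯ ∧ β(y_l)) = α(e₁) ∧ ⋯ ∧ α(e_a) ∧ y₁ ∧ ⋯ ∧ y_l for all y₁, …, y_l ∈ R^{a+l} (e₁, …, e_a the standard basis of R^a). Under the R-module isomorphism ⋀^{a+l}_R R^{a+l} ≅ R sending e₁ ∧ ⋯ ∧ e_{a+l} to 1, the image of Ψ equals the ideal of R generated by all a×a minors of the matrix of α with respect to the standard bases. -/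
open Function

/-!
Since `β` is surjective, the image of `θ ∘ Ψ` is spanned by the determinants of the square
matrices whose first `a` rows are the columns of the matrix `A` of `α` and whose last `l` rows
`y` are arbitrary. Such a determinant is multilinear in `y`, so it suffices to let `y` run over
tuples of standard basis vectors `e_{r 1}, …, e_{r l}`. The determinant vanishes unless `r` is
injective, and then reordering rows and columns makes the matrix block triangular with an
identity block: up to sign it is the minor of `A` on the rows outside the image of `r`. Every
maximal minor of `A` arises in this way.
-/

theorem Function.Injective.exists_sumEquiv_comp_inl {ι κ τ : Type*} [Fintype ι] [Fintype κ]
    [Fintype τ] {f : ι → τ} (hf : Injective f)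
    (h : Fintype.card ι + Fintype.card κ = Fintype.card τ) :
    ∃ e : ι ⊕ κ ≃ τ, e ∘ Sum.inl = f := by
  classical
  have hc : Fintype.card κ = Fintype.card ((Set.range f)ᶜ : Set τ) := by
    rw [Fintype.card_compl_set, Set.card_range_of_injective hf]
    omega
  refine ⟨(Equiv.sumCongr (Equiv.ofInjective f hf) (Fintype.equivOfCardEq hc)).trans
    (Equiv.Set.sumCompl (Set.range f)), funext fun i => by simp⟩

theorem MultilinearMap.map_mem_of_forall_single {R ι κ N : Type*} [CommSemiring R] [Fintype ι]
    [DecidableEq ι] [Fintype κ] [DecidableEq κ] [AddCommMonoid N] [Module R N]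
    (f : MultilinearMap R (fun _ : ι => κ → R) N) {P : Submodule R N}
    (h : ∀ r : ι → κ, f (fun i => Pi.single (r i) 1) ∈ P) (y : ι → κ → R) :
    f y ∈ P := by
  rw [show y = fun i => ∑ k, y i k • Pi.single k 1 from funext fun i => pi_eq_sum_univ' (y i),
    f.map_sum]
  exact Submodule.sum_mem _ fun r _ => by rw [f.map_smul_univ]; exact P.smul_mem _ (h r)

namespace Matrix

variable {R : Type*} [CommRing R]

theorem associated_det_submatrix {m n : Type*} [Fintype m] [DecidableEq m] [Fintype n]
    [DecidableEq n] (M : Matrix n n R) (e f : m ≃ n) :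
    Associated M.det (M.submatrix e f).det := by
  refine ⟨Units.map (Int.castRingHom R) (Equiv.Perm.sign (f.trans e.symm)), ?_⟩
  have : M.submatrix e f = (M.submatrix e e).submatrix id (f.trans e.symm) := by
    ext i j
    simp
  rw [this, det_permute', det_submatrix_equiv_self, mul_comm]
  rfl

def maxMinorsIdeal {ι κ : Type*} [Fintype κ] [DecidableEq κ] (A : Matrix ι κ R) : Ideal R :=
  Ideal.span {x | ∃ σ : κ ↪ ι, x = (A.submatrix σ id).det}

variable {m n : ℕ}

theorem associated_det_append_col_single (A : Matrix (Fin (m + n)) (Fin m) R)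
    (e : Fin m ⊕ Fin n ≃ Fin (m + n)) :
    Associated (of (Fin.append A.col fun j => Pi.single (e (.inr j)) 1)).det
      (A.submatrix (e ∘ Sum.inl) id).det := by
  set C := of (Fin.append A.col fun j => Pi.single (e (.inr j)) (1 : R))
  have hblock : C.submatrix finSumFinEquiv e =
      fromBlocks (A.submatrix (e ∘ Sum.inl) id)ᵀ (A.submatrix (e ∘ Sum.inr) id)ᵀ 0 1 := by
    ext (i | j) (i' | j')
    · simp [C]
    · simp [C]
    · simp [C, e.injective.eq_iff]
    · simp [C, Pi.single_apply, one_apply, e.injective.eq_iff, eq_comm]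
  have h := C.associated_det_submatrix finSumFinEquiv e
  rwa [hblock, det_fromBlocks_zero₂₁, det_transpose, det_one, mul_one] at h

theorem det_append_col_single_mem_maxMinorsIdeal (A : Matrix (Fin (m + n)) (Fin m) R)
    (r : Fin n → Fin (m + n)) :
    (of (Fin.append A.col fun j => Pi.single (r j) 1)).det ∈ A.maxMinorsIdeal := by
  by_cases hr : Injective r
  · obtain ⟨e, he⟩ := hr.exists_sumEquiv_comp_inl (κ := Fin m) (by simp [add_comm])
    obtain ⟨e, rfl⟩ : ∃ e : Fin m ⊕ Fin n ≃ Fin (m + n), e ∘ Sum.inr = r :=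
      ⟨(Equiv.sumComm _ _).trans e, he⟩
    exact Ideal.mem_of_dvd _ (associated_det_append_col_single A e).symm.dvd
      (Ideal.subset_span ⟨⟨_, e.injective.comp Sum.inl_injective⟩, rfl⟩)
  · obtain ⟨j₁, j₂, hr, hne⟩ := not_injective_iff.mp hr
    rw [det_zero_of_row_eq (i := Fin.natAdd m j₁) (j := Fin.natAdd m j₂) (by simpa using hne)
      (funext fun k => by simp [hr])]
    exact Ideal.zero_mem _

theorem det_append_mem_of_forall_single {I : Ideal R} (u : Fin m → Fin (m + n) → R)
    (h : ∀ r : Fin n → Fin (m + n), (of (Fin.append u fun j => Pi.single (r j) 1)).det ∈ I)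
    (y : Fin n → Fin (m + n) → R) : (of (Fin.append u y)).det ∈ I := by
  let f := (detRowAlternating.toMultilinearMap.domDomCongr finSumFinEquiv.symm).currySum u
  have hf : ∀ y, f y = (of (Fin.append u y)).det := fun y => by
    show detRowAlternating _ = detRowAlternating (Fin.append u y)
    congr
    funext i
    refine Fin.addCases (fun i => ?_) (fun j => ?_) i <;> simp
  simpa only [hf] using f.map_mem_of_forall_single (P := I) (by simpa only [hf] using h) y

theorem span_range_det_append_col_eq_maxMinorsIdeal (A : Matrix (Fin (m + n)) (Fin m) R) :
    Submodule.span R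
        (Set.range fun y : Fin n → Fin (m + n) → R => (of (Fin.append A.col y)).det) =
      A.maxMinorsIdeal := by
  apply le_antisymm
  · rw [Submodule.span_le]
    rintro _ ⟨y, rfl⟩
    exact det_append_mem_of_forall_single _ (det_append_col_single_mem_maxMinorsIdeal A) y
  · refine Ideal.span_le.mpr ?_
    rintro _ ⟨σ, rfl⟩
    obtain ⟨e, he⟩ := σ.injective.exists_sumEquiv_comp_inl (κ := Fin n) (by simp)
    have h := associated_det_append_col_single A e
    rw [he] at h
    exact Ideal.mem_of_dvd _ h.dvd (Submodule.subset_span ⟨_, rfl⟩)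

end Matrix

theorem range_eq_span_wedge_comp_of_surjective {R M N P : Type*} [CommRing R] [AddCommGroup M]
    [Module R M] [AddCommGroup N] [Module R N] [AddCommGroup P] [Module R P] {n : ℕ}
    {β : N →ₗ[R] M} (hβ : Surjective β) (F : ⋀[R]^n M →ₗ[R] P) :
    LinearMap.range F =
      Submodule.span R (Set.range fun y : Fin n → N => F (wedge R n fun i => β (y i))) := by
  rw [← LinearMap.range_comp_of_range_eq_top F
      (LinearMap.range_eq_top.mpr (exteriorPower.map_surjective hβ)),
    LinearMap.range_eq_map, ← exteriorPower.ιMulti_span, Submodule.map_span, ← Set.range_comp]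
  congr with y
  exact congrArg F (exteriorPower.map_apply_ιMulti β y)

theorem apply_wedge_eq_det {R : Type*} [CommRing R] {n : ℕ}
    (θ : ⋀[R]^n (Fin n → R) →ₗ[R] R)
    (hθ : θ (wedge R n fun i => Pi.single i 1) = 1) (v : Fin n → Fin n → R) :
    θ (wedge R n v) = (Matrix.of v).det := by
  have h := congr($((θ.compAlternatingMap (exteriorPower.ιMulti R n)).eq_smul_basis_det
    (Pi.basisFun R _)) v)
  rw [AlternatingMap.smul_apply, Pi.basisFun_det_apply] at h
  change θ (wedge R n v) = θ (wedge R n (Pi.basisFun R (Fin n))) • _ at h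
  rwa [funext (Pi.basisFun_apply R (Fin n)), hθ, one_smul] at h

theorem range_wedge_lift_eq_minors_general
    (R : Type*) [CommRing R] (a l : ℕ)
    (M : Type*) [AddCommGroup M] [Module R M]
    (α : (Fin a → R) →ₗ[R] (Fin (a + l) → R)) (β : (Fin (a + l) → R) →ₗ[R] M)
    (hβ : Function.Surjective β)
    (Ψ : (⋀[R]^l M) →ₗ[R] (⋀[R]^(a + l) (Fin (a + l) → R)))
    (hΨ : ∀ y : Fin l → (Fin (a + l) → R),
      Ψ (wedge R l (fun i => β (y i))) =
        wedge R (a + l) (Fin.append (fun i : Fin a => α (Pi.single i 1)) y))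
    (θ : (⋀[R]^(a + l) (Fin (a + l) → R)) ≃ₗ[R] R)
    (hθ : θ (wedge R (a + l) (fun i => Pi.single i 1)) = 1) :
    Submodule.map (θ : (⋀[R]^(a + l) (Fin (a + l) → R)) →ₗ[R] R) (LinearMap.range Ψ) =
      Ideal.span { x : R | ∃ σ : Fin a ↪ Fin (a + l),
        x = ((LinearMap.toMatrix' α).submatrix (⇑σ) id).det } := by
  have hcol : (fun i : Fin a => α (Pi.single i 1)) = (LinearMap.toMatrix' α).col :=
    funext fun i => by rw [← Matrix.mulVec_single_one, LinearMap.toMatrix'_mulVec]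
  have hdet : ∀ v, θ (wedge R (a + l) v) = (Matrix.of v).det :=
    apply_wedge_eq_det θ.toLinearMap hθ
  rw [← LinearMap.range_comp, range_eq_span_wedge_comp_of_surjective hβ]
  simp_rw [LinearMap.comp_apply, hΨ, hcol, LinearEquiv.coe_coe, hdet]
  exact Matrix.span_range_det_append_col_eq_maxMinorsIdeal _

/-- Under the isomorphism `⋀^{a+l} R^{a+l} ≅ R` sending
`e₁ ∧ ⋯ ∧ e_{a+l}` to `1`, the image of `Ψ` is the ideal generated by the `a × a` minors of
the matrix of `α`. -/
theorem range_wedge_lift_eq_minors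
    (R : Type*) [CommRing R] (a l : ℕ)
    (M : Type*) [AddCommGroup M] [Module R M]
    (α : (Fin a → R) →ₗ[R] (Fin (a + l) → R)) (β : (Fin (a + l) → R) →ₗ[R] M)
    (hα : Function.Injective α) (hαβ : Function.Exact α β) (hβ : Function.Surjective β)
    (Ψ : (⋀[R]^l M) →ₗ[R] (⋀[R]^(a + l) (Fin (a + l) → R)))
    (hΨ : ∀ y : Fin l → (Fin (a + l) → R),
      Ψ (wedge R l (fun i => β (y i))) =
        wedge R (a + l) (Fin.append (fun i : Fin a => α (Pi.single i 1)) y))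
    (θ : (⋀[R]^(a + l) (Fin (a + l) → R)) ≃ₗ[R] R)
    (hθ : θ (wedge R (a + l) (fun i => Pi.single i 1)) = 1) :
    Submodule.map (θ : (⋀[R]^(a + l) (Fin (a + l) → R)) →ₗ[R] R) (LinearMap.range Ψ) =
      Ideal.span { x : R | ∃ σ : Fin a ↪ Fin (a + l),
        x = ((LinearMap.toMatrix' α).submatrix (⇑σ) id).det } :=
  range_wedge_lift_eq_minors_general R a l M α β hβ Ψ hΨ θ hθ
end

section
/- Let Λ be a commutative Noetherian regular local ring and R a commutative Λ-algebra that is free of finite rank as a Λ-module and admits an isomorphism of R-modules Hom_Λ(R, Λ) ≅ R. Let P be an R-module admitting an exact sequence 0 → R^a →f R^a → P → 0. Then Ext¹_R(P, R) admits an exact sequence of the same form 0 → R^a → R^a → Ext¹_R(P, R) → 0 (induced by the dual map of f), and there is an isomorphism of R-modules Ext¹_R(Ext¹_R(P, R), R) ≅ P. -/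
open Function CategoryTheory

/-- The `n`-th Ext module of two modules over a commutative ring. -/
noncomputable def extMod (R : Type u) [CommRing R] (n : ℕ) (M N : ModuleCat.{u} R) :
    ModuleCat.{u} R :=
  ((Ext R (ModuleCat.{u} R) n).obj (Opposite.op M)).obj N

/-!
A presentation `0 → R^a →f R^a →g P → 0` is a projective resolution of `P` of length one, so
`Ext¹(P, R)` is the cokernel of `Hom(f, R)`; identifying `Hom(R^a, R)` with `R^a` by the dot
product turns `Hom(f, R)` into the transpose of the matrix of `f`. The transpose is again
injective by McCoy's theorem (injectivity of a square matrix depends only on whether its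
determinant is a non-zero-divisor), so `Ext¹(P, R)` has a presentation of the same shape, and
computing `Ext¹` once more gives the cokernel of the double transpose, that is of `f`: this is `P`.
-/

open Limits ZeroObject
open scoped Matrix

theorem Matrix.toLin'_transpose_injective {R n : Type*} [CommRing R] [Fintype n] [DecidableEq n]
    {M : Matrix n n R} (hM : Injective (toLin' M)) : Injective (toLin' Mᵀ) := by
  rw [toLin'_apply', coe_mulVecLin, mulVec_injective_iff] at hM ⊢
  rwa [col_transpose, ← linearIndependent_col_iff_row]

namespace CategoryTheory

variable {C : Type*} [Category C] [Abelian C]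

namespace ShortComplex

variable (S : ShortComplex C)

-- Objects and differentials are named so that `ChainComplex.of_d` can rewrite `d` below.
noncomputable def twoTermX : ℕ → C
  | 0 => S.X₂
  | 1 => S.X₁
  | _ + 2 => 0

noncomputable def twoTermD : ∀ n, S.twoTermX (n + 1) ⟶ S.twoTermX n
  | 0 => S.f
  | _ + 1 => 0

noncomputable def twoTermComplex : ChainComplex C ℕ :=
  ChainComplex.of S.twoTermX S.twoTermD (fun _ => zero_comp)

lemma twoTermComplex_d_one_zero : S.twoTermComplex.d 1 0 = S.f :=
  ChainComplex.of_d S.twoTermX S.twoTermD 0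

lemma twoTermComplex_d_succ_succ (n : ℕ) : S.twoTermComplex.d (n + 2) (n + 1) = 0 :=
  ChainComplex.of_d S.twoTermX S.twoTermD (n + 1)

noncomputable def twoTermComplexπ : S.twoTermComplex ⟶ (ChainComplex.single₀ C).obj S.X₃ :=
  (ChainComplex.toSingle₀Equiv _ _).symm ⟨S.g, by rw [twoTermComplex_d_one_zero]; exact S.zero⟩

lemma twoTermComplexπ_f_zero : S.twoTermComplexπ.f 0 = S.g :=
  ChainComplex.toSingle₀Equiv_symm_apply_f_zero _ _

variable {S}

instance [Projective S.X₁] [Projective S.X₂] (n : ℕ) : Projective (S.twoTermComplex.X n) :=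
  match n with
  | 0 => inferInstanceAs (Projective S.X₂)
  | 1 => inferInstanceAs (Projective S.X₁)
  | _ + 2 => inferInstanceAs (Projective (0 : C))

lemma ShortExact.twoTermComplex_exactAt_succ (hS : S.ShortExact) (n : ℕ) :
    S.twoTermComplex.ExactAt (n + 1) := by
  rw [HomologicalComplex.exactAt_iff' _ (n + 2) (n + 1) n (by simp) (by simp)]
  match n with
  | 0 =>
    rw [ShortComplex.exact_iff_mono _ (twoTermComplex_d_succ_succ S 0)]
    have : Mono (S.twoTermComplex.d 1 0) := by
      rw [twoTermComplex_d_one_zero]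
      exact hS.mono_f
    exact this
  | _ + 1 => exact ShortComplex.exact_of_isZero_X₂ _ (isZero_zero C)

lemma ShortExact.quasiIso_twoTermComplexπ (hS : S.ShortExact) :
    _root_.QuasiIso S.twoTermComplexπ where
  quasiIsoAt
  | 0 => by
    rw [ChainComplex.quasiIsoAt₀_iff, ShortComplex.quasiIso_iff_of_zeros' _ rfl rfl rfl]
    refine (ShortComplex.exact_and_epi_g_iff_of_iso ?_).2 ⟨hS.exact, hS.epi_g⟩
    refine ShortComplex.isoMk (Iso.refl _) (Iso.refl _) (Iso.refl _) ?_ ?_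
    · exact (Category.id_comp _).trans
        ((twoTermComplex_d_one_zero S).symm.trans (Category.comp_id _).symm)
    · exact (Category.id_comp _).trans
        ((twoTermComplexπ_f_zero S).symm.trans (Category.comp_id _).symm)
  | n + 1 => by
    rw [quasiIsoAt_iff_exactAt' _ _ (ChainComplex.exactAt_succ_single_obj _ _)]
    exact hS.twoTermComplex_exactAt_succ n

noncomputable def ShortExact.projectiveResolution (hS : S.ShortExact) [Projective S.X₁]
    [Projective S.X₂] : ProjectiveResolution S.X₃ where
  complex := S.twoTermComplex
  π := S.twoTermComplexπ
  quasiIso := hS.quasiIso_twoTermComplexπ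

end ShortComplex

section Ext

variable {R : Type*} [Ring R] [Linear R C] [EnoughProjectives C]

theorem ProjectiveResolution.exists_surjective_exact_ext_one {X : C} (P : ProjectiveResolution X)
    (hP : P.complex.d 2 1 = 0) (Y : C) :
    ∃ π : (P.complex.X 1 ⟶ Y) →ₗ[R] ((Ext R C 1).obj (Opposite.op X)).obj Y,
      Surjective π ∧ Function.Exact (Linear.leftComp R Y (P.complex.d 1 0)) π := by
  set K := P.complex.linearYonedaObj R Y
  have hK : K.d 1 2 = 0 := by ext; simp [K, hP]; exact zero_comp
  -- Since the differential leaving degree 1 vanishes, `H¹(K)` is the cokernel of `K.d 0 1`.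
  let ι := (K.isoHomologyι 1 2 (by simp) hK).inv ≫ (P.isoExt 1 Y).inv
  have hcoker : Function.Exact (K.d 0 1) (K.pOpcycles 1) :=
    (ShortComplex.ShortExact.moduleCat_exact_iff_function_exact
      (ShortComplex.mk (K.d 0 1) (K.pOpcycles 1) (K.d_pOpcycles 0 1))).1
      (ShortComplex.exact_of_g_is_cokernel _ (K.opcyclesIsCokernel 0 1 (by simp)))
  refine ⟨(K.pOpcycles 1 ≫ ι).hom, (ModuleCat.epi_iff_surjective _).1 inferInstance, ?_⟩
  exact hcoker.comp_injective (g' := ι) ((ModuleCat.mono_iff_injective _).1 inferInstance)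
    (map_zero _)

theorem ShortComplex.ShortExact.exists_surjective_exact_ext_one {S : ShortComplex C}
    (hS : S.ShortExact) [Projective S.X₁] [Projective S.X₂] (Y : C) :
    ∃ π : (S.X₁ ⟶ Y) →ₗ[R] ((Ext R C 1).obj (Opposite.op S.X₃)).obj Y,
      Surjective π ∧ Function.Exact (Linear.leftComp R Y S.f) π := by
  have := hS.projectiveResolution.exists_surjective_exact_ext_one (R := R)
    (twoTermComplex_d_succ_succ S 0) Y
  rwa [projectiveResolution, twoTermComplex_d_one_zero] at this

end Ext

end CategoryTheory

section FreePresentation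

variable {R : Type u} [CommRing R]

noncomputable def ModuleCat.piEquivHom (n : ℕ) :
    (Fin n → R) ≃ₗ[R] (ModuleCat.of R (Fin n → R) ⟶ ModuleCat.of R R) :=
  (Module.piEquiv (Fin n) R R).trans
    (ModuleCat.homLinearEquiv (M := ModuleCat.of R (Fin n → R)) (N := ModuleCat.of R R)).symm

lemma ModuleCat.piEquivHom_apply_hom {n : ℕ} (v w : Fin n → R) :
    (piEquivHom n v).hom w = w ⬝ᵥ v :=
  (Module.piEquiv_apply_apply _ _ _ v w).trans (by simp [dotProduct])

lemma ModuleCat.leftComp_ofHom_comp_piEquivHom {m n : ℕ}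
    (f : (Fin m → R) →ₗ[R] (Fin n → R)) :
    Linear.leftComp R (ModuleCat.of R R) (ModuleCat.ofHom f) ∘ₗ (piEquivHom n).toLinearMap =
      (piEquivHom m).toLinearMap ∘ₗ Matrix.toLin' (LinearMap.toMatrix' f)ᵀ := by
  refine LinearMap.ext fun v => ModuleCat.hom_ext (LinearMap.ext fun (w : Fin m → R) => ?_)
  simp only [LinearMap.comp_apply, LinearEquiv.coe_coe, Linear.leftComp_apply,
    ModuleCat.hom_comp, ModuleCat.hom_ofHom, Matrix.toLin'_apply]
  rw [piEquivHom_apply_hom, piEquivHom_apply_hom, ← LinearMap.toMatrix'_mulVec,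
    Matrix.mulVec_transpose, dotProduct_comm, Matrix.dotProduct_mulVec, dotProduct_comm]

theorem exists_surjective_exact_extMod_one_transpose {m n : ℕ} {P : ModuleCat.{u} R}
    {f : (Fin m → R) →ₗ[R] (Fin n → R)} {g : (Fin n → R) →ₗ[R] P}
    (hf : Injective f) (hfg : Function.Exact f g) (hg : Surjective g) :
    ∃ π : (Fin m → R) →ₗ[R] extMod R 1 P (ModuleCat.of R R),
      Surjective π ∧ Function.Exact (Matrix.toLin' (LinearMap.toMatrix' f)ᵀ) π := by
  let S := ModuleCat.shortComplexOfCompEqZero f g hfg.linearMap_comp_eq_zero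
  have hS := ModuleCat.shortComplex_shortExact S hfg hf hg
  obtain ⟨π, hπ, hexact⟩ := hS.exists_surjective_exact_ext_one (R := R) (ModuleCat.of R R)
  refine ⟨π ∘ₗ (ModuleCat.piEquivHom m).toLinearMap, hπ.comp (LinearEquiv.surjective _), ?_⟩
  exact (Function.Exact.iff_of_ladder_linearEquiv (g₂₃ := π) (e₃ := LinearEquiv.refl R _)
    (ModuleCat.leftComp_ofHom_comp_piEquivHom f) rfl).1 hexact

end FreePresentation

theorem ext_one_of_torsion_pd_le_one_general
    (R : Type u) [CommRing R]
    (a : ℕ) (P : Type u) [AddCommGroup P] [Module R P]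
    (f : (Fin a → R) →ₗ[R] (Fin a → R)) (g : (Fin a → R) →ₗ[R] P)
    (hf : Function.Injective f) (hfg : Function.Exact f g) (hg : Function.Surjective g) :
    (Function.Injective (Matrix.toLin' (LinearMap.toMatrix' f).transpose) ∧
      ∃ π : (Fin a → R) →ₗ[R] extMod R 1 (ModuleCat.of R P) (ModuleCat.of R R),
        Function.Surjective π ∧
          Function.Exact (Matrix.toLin' (LinearMap.toMatrix' f).transpose) π) ∧
    Nonempty
      ((extMod R 1 (extMod R 1 (ModuleCat.of R P) (ModuleCat.of R R)) (ModuleCat.of R R))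
        ≃ₗ[R] P) := by
  have hfT : Injective (Matrix.toLin' (LinearMap.toMatrix' f).transpose) :=
    Matrix.toLin'_transpose_injective (M := LinearMap.toMatrix' f)
      (by rwa [Matrix.toLin'_toMatrix'])
  obtain ⟨π₁, hπ₁, hexact₁⟩ :=
    exists_surjective_exact_extMod_one_transpose (P := ModuleCat.of R P) hf hfg hg
  refine ⟨⟨hfT, π₁, hπ₁, hexact₁⟩, ?_⟩
  obtain ⟨π₂, hπ₂, hexact₂⟩ := exists_surjective_exact_extMod_one_transpose hfT hexact₁ hπ₁
  rw [LinearMap.toMatrix'_toLin', Matrix.transpose_transpose, Matrix.toLin'_toMatrix']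
    at hexact₂
  exact ⟨(hexact₂.linearEquivOfSurjective hπ₂).symm ≪≫ₗ hfg.linearEquivOfSurjective hg⟩

/-- In the Gorenstein setting, if `P` admits an exact sequence
`0 → R^a →f R^a → P → 0`, then `Ext¹_R(P, R)` admits an exact sequence of the same form,
induced by the dual (transpose) of `f`, and `Ext¹_R(Ext¹_R(P, R), R) ≅ P`. -/
theorem ext_one_of_torsion_pd_le_one
    (Λ : Type u) [CommRing Λ] [IsLocalRing Λ] [IsNoetherianRing Λ] (hΛ : IsRegularLocal Λ)
    (R : Type u) [CommRing R] [Algebra Λ R] [Module.Free Λ R] [Module.Finite Λ R]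
    (hGor : ∃ φ : R ≃ₗ[Λ] (R →ₗ[Λ] Λ), ∀ r s x : R, φ (r * s) x = φ s (r * x))
    (a : ℕ) (P : Type u) [AddCommGroup P] [Module R P]
    (f : (Fin a → R) →ₗ[R] (Fin a → R)) (g : (Fin a → R) →ₗ[R] P)
    (hf : Function.Injective f) (hfg : Function.Exact f g) (hg : Function.Surjective g) :
    (Function.Injective (Matrix.toLin' (LinearMap.toMatrix' f).transpose) ∧
      ∃ π : (Fin a → R) →ₗ[R] extMod R 1 (ModuleCat.of R P) (ModuleCat.of R R),
        Function.Surjective π ∧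
          Function.Exact (Matrix.toLin' (LinearMap.toMatrix' f).transpose) π) ∧
    Nonempty
      ((extMod R 1 (extMod R 1 (ModuleCat.of R P) (ModuleCat.of R R)) (ModuleCat.of R R))
        ≃ₗ[R] P) :=
  ext_one_of_torsion_pd_le_one_general R a P f g hf hfg hg
end

section
/- Let Λ be a commutative Noetherian regular local ring and R a commutative Λ-algebra that is free of finite rank as a Λ-module and admits an isomorphism of R-modules Hom_Λ(R, Λ) ≅ R. Let P be a finitely generated R-module annihilated by some non-zero-divisor of R. Then P has projective dimension at most 1 over R if and only if there exist an integer a ≥ 0 and an exact sequence of R-modules 0 → R^a → R^a → P → 0. -/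
open Function CategoryTheory

/-- An `R`-module has projective dimension at most one if it admits a projective
resolution `0 → P₁ → P₀ → M → 0` of length one. -/
def ProjDimLEOne (R : Type u) [CommRing R] (M : Type u) [AddCommGroup M] [Module R M] : Prop :=
  ∃ (P₁ P₀ : ModuleCat.{u} R) (f : P₁ ⟶ P₀) (g : P₀ ⟶ ModuleCat.of R M),
    Module.Projective R P₁ ∧ Module.Projective R P₀ ∧
    Function.Injective f ∧ Function.Exact f g ∧ Function.Surjective g

/-!
Given a projective resolution `0 → P₁ → P₀ → P → 0`, dimension shifting for `Ext` shows that the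
kernel `K` of any surjection `Rⁿ → P` is projective. A non-zero-divisor `r` killing `P` gives
`r • Rⁿ ⊆ K ⊆ Rⁿ`, so every localization of `K` is free of rank `n`. Being finite over the local
ring `Λ`, the ring `R` is semilocal, and over a semilocal ring a finite projective module of
constant rank `n` is free of rank `n`; hence `K ≅ Rⁿ`.
-/

universe u

section ProjectiveDimension

variable {R : Type u} [CommRing R] {M : Type u} [AddCommGroup M] [Module R M]

theorem ProjDimLEOne.hasProjectiveDimensionLT_two (h : ProjDimLEOne R M) :
    HasProjectiveDimensionLT (ModuleCat.of R M) 2 := by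
  obtain ⟨P₁, P₀, f, g, _, _, hf, hfg, hg⟩ := h
  let S : ShortComplex (ModuleCat.{u} R) :=
    ShortComplex.mk f g (by ext x; exact hfg.apply_apply_eq_zero x)
  exact (ModuleCat.shortComplex_shortExact S hfg hf hg).hasProjectiveDimensionLT_X₃ 1
    inferInstance inferInstance

theorem ProjDimLEOne.projective_ker (h : ProjDimLEOne R M) {Q : Type u} [AddCommGroup Q]
    [Module R Q] [Module.Projective R Q] {π : Q →ₗ[R] M} (hπ : Surjective π) :
    Module.Projective R (LinearMap.ker π) := by
  have := (π.shortExact_shortComplexKer hπ).hasProjectiveDimensionLT_X₁ 1 inferInstance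
    h.hasProjectiveDimensionLT_two
  exact (IsProjective.iff_projective _).mpr inferInstance

theorem projDimLEOne_of_exact {P₁ P₀ : Type u} [AddCommGroup P₁] [Module R P₁]
    [Module.Projective R P₁] [AddCommGroup P₀] [Module R P₀] [Module.Projective R P₀]
    {f : P₁ →ₗ[R] P₀} {g : P₀ →ₗ[R] M} (hf : Injective f) (hfg : Exact f g)
    (hg : Surjective g) : ProjDimLEOne R M :=
  ⟨.of R P₁, .of R P₀, ModuleCat.ofHom f, ModuleCat.ofHom g, ‹_›, ‹_›, hf, hfg, hg⟩

end ProjectiveDimension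

namespace Module

open TensorProduct

variable {R : Type*} [CommRing R]

theorem rankAtStalk_eq_of_injective {M N : Type*} [AddCommGroup M] [Module R M]
    [AddCommGroup N] [Module R N] [Module.Finite R M] [Module.Finite R N]
    {f : M →ₗ[R] N} {g : N →ₗ[R] M} (hf : Function.Injective f) (hg : Function.Injective g) :
    rankAtStalk (R := R) M = rankAtStalk N := by
  ext p
  exact le_antisymm
    (LinearMap.finrank_le_finrank_of_injective (LocalizedModule.map_injective _ f hf))
    (LinearMap.finrank_le_finrank_of_injective (LocalizedModule.map_injective _ g hg))

theorem finrank_quotient_tensorProduct_eq_rankAtStalk (M : Type*) [AddCommGroup M] [Module R M]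
    [Module.Finite R M] [Flat R M] (P : Ideal R) [P.IsMaximal] :
    finrank (R ⧸ P) ((R ⧸ P) ⊗[R] M) = rankAtStalk M ⟨P, inferInstance⟩ := by
  let := Ideal.Quotient.field P
  rw [rankAtStalk_eq, ← (AlgebraTensorModule.cancelBaseChange R (R ⧸ P)
    P.ResidueField P.ResidueField M).finrank_eq, finrank_baseChange (R := P.ResidueField)]

end Module

theorem finite_maximalSpectrum_of_isLocalRing_of_finite (Λ R : Type*) [CommRing Λ]
    [IsLocalRing Λ] [CommRing R] [Algebra Λ R] [Module.Finite Λ R] : Finite (MaximalSpectrum R) := by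
  have := (Algebra.QuasiFinite.finite_primesOver (IsLocalRing.maximalIdeal Λ) (S := R)).to_subtype
  refine Finite.of_injective (β := (IsLocalRing.maximalIdeal Λ).primesOver R)
    (fun m => ⟨m.asIdeal, m.isMaximal.isPrime, ⟨?_⟩⟩) ?_
  · exact (IsLocalRing.eq_maximalIdeal
      (Ideal.isMaximal_comap_of_isIntegral_of_isMaximal (R := Λ) m.asIdeal)).symm
  · intro m m' h
    exact MaximalSpectrum.ext (congrArg Subtype.val h)

open Module in
theorem Submodule.nonempty_basis_of_smul_mem {R : Type*} [CommRing R] [Finite (MaximalSpectrum R)]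
    {n : ℕ} (K : Submodule R (Fin n → R)) [Module.Finite R K] [Module.Projective R K] {r : R}
    (hr : r ∈ nonZeroDivisors R) (hK : ∀ x, r • x ∈ K) : Nonempty (Basis (Fin n) R K) := by
  have hreg : IsSMulRegular (Fin n → R) r :=
    IsSMulRegular.pi fun _ => isSMulRegular_iff_mem_nonZeroSMulDivisors.mpr hr.1
  have hrank : rankAtStalk (R := R) K = rankAtStalk (Fin n → R) :=
    rankAtStalk_eq_of_injective K.injective_subtype
      (g := (LinearMap.lsmul R _ r).codRestrict K hK) fun x y h => hreg (congrArg Subtype.val h)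
  refine nonempty_basis_of_flat_of_finrank_eq R K n fun P => ?_
  have : Nontrivial R := (Ideal.Quotient.mk P.asIdeal).domain_nontrivial
  rw [finrank_quotient_tensorProduct_eq_rankAtStalk, hrank, rankAtStalk_eq_finrank_of_free]
  simp

theorem exists_square_presentation_of_projDimLEOne {R : Type u} [CommRing R] [IsNoetherianRing R]
    [Finite (MaximalSpectrum R)] {P : Type u} [AddCommGroup P] [Module R P] [Module.Finite R P]
    {r : R} (hr : r ∈ nonZeroDivisors R) (hrP : ∀ x : P, r • x = 0) (h : ProjDimLEOne R P) :
    ∃ (a : ℕ) (f : (Fin a → R) →ₗ[R] (Fin a → R)) (g : (Fin a → R) →ₗ[R] P),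
      Injective f ∧ Exact f g ∧ Surjective g := by
  obtain ⟨n, π, hπ⟩ := Module.Finite.exists_fin' R P
  have := h.projective_ker hπ
  obtain ⟨b⟩ := (LinearMap.ker π).nonempty_basis_of_smul_mem hr fun x => by simp [hrP]
  refine ⟨n, (LinearMap.ker π).subtype ∘ₗ b.equivFun.symm.toLinearMap, π,
    (LinearMap.ker π).injective_subtype.comp b.equivFun.symm.injective, ?_, hπ⟩
  rw [LinearMap.exact_iff, LinearMap.range_comp, LinearEquiv.range, Submodule.map_top,
    Submodule.range_subtype]

theorem pd_le_one_iff_exists_square_presentation_general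
    (Λ : Type u) [CommRing Λ] [IsLocalRing Λ] [IsNoetherianRing Λ]
    (R : Type u) [CommRing R] [Algebra Λ R] [Module.Finite Λ R]
    (P : Type u) [AddCommGroup P] [Module R P] [Module.Finite R P]
    (htor : ∃ r ∈ nonZeroDivisors R, ∀ x : P, r • x = 0) :
    ProjDimLEOne R P ↔
      ∃ (a : ℕ) (f : (Fin a → R) →ₗ[R] (Fin a → R)) (g : (Fin a → R) →ₗ[R] P),
        Function.Injective f ∧ Function.Exact f g ∧ Function.Surjective g := by
  have : IsNoetherianRing R := IsNoetherianRing.of_finite Λ R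
  have : Finite (MaximalSpectrum R) := finite_maximalSpectrum_of_isLocalRing_of_finite Λ R
  obtain ⟨r, hr, hrP⟩ := htor
  refine ⟨exists_square_presentation_of_projDimLEOne hr hrP, ?_⟩
  rintro ⟨a, f, g, hf, hfg, hg⟩
  exact projDimLEOne_of_exact hf hfg hg

/-- In the Gorenstein setting, a finitely generated torsion `R`-module `P`
has projective dimension at most one if and only if it admits an exact sequence
`0 → R^a → R^a → P → 0`. -/
theorem pd_le_one_iff_exists_square_presentation
    (Λ : Type u) [CommRing Λ] [IsLocalRing Λ] [IsNoetherianRing Λ] (hΛ : IsRegularLocal Λ)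
    (R : Type u) [CommRing R] [Algebra Λ R] [Module.Free Λ R] [Module.Finite Λ R]
    (hGor : ∃ φ : R ≃ₗ[Λ] (R →ₗ[Λ] Λ), ∀ r s x : R, φ (r * s) x = φ s (r * x))
    (P : Type u) [AddCommGroup P] [Module R P] [Module.Finite R P]
    (htor : ∃ r ∈ nonZeroDivisors R, ∀ x : P, r • x = 0) :
    ProjDimLEOne R P ↔
      ∃ (a : ℕ) (f : (Fin a → R) →ₗ[R] (Fin a → R)) (g : (Fin a → R) →ₗ[R] P),
        Function.Injective f ∧ Function.Exact f g ∧ Function.Surjective g :=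
  pd_le_one_iff_exists_square_presentation_general Λ R P htor
end

section
/- Let Λ be a commutative ring and R a commutative Λ-algebra that is free of finite rank as a Λ-module and admits an isomorphism of R-modules Hom_Λ(R, Λ) ≅ R. Then for every R-module M and every integer i ≥ 0 there is a natural isomorphism of Λ-modules Ext^i_R(M, R) ≅ Ext^i_Λ(M, Λ), where on the right-hand side M is regarded as a Λ-module by restriction of scalars. -/
/-!
Restriction of scalars along `Λ → R` is exact and, `R` being projective over `Λ`, sends a
projective resolution `P` of `M` over `R` to a projective resolution of `M` over `Λ`. The
Gorenstein condition says that `φ s = t ∘ (s * ·)` for the functional `t = φ 1 : R → Λ`, and then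
`f ↦ t ∘ f` is an isomorphism `Hom_R(X, R) ≅ Hom_Λ(X, Λ)`, natural in `X`. Applied to `P`, it
identifies the two complexes computing `Ext`.
-/

open CategoryTheory

universe u

theorem Module.Projective.trans {R S M : Type*} [CommSemiring R] [Semiring S] [Algebra R S]
    [AddCommMonoid M] [Module R M] [Module S M] [IsScalarTower R S M]
    [Module.Projective R S] [Module.Projective S M] : Module.Projective R M := by
  classical
  obtain ⟨s, hs⟩ := Module.projective_def'.mp ‹Module.Projective S M›
  have : Module.Projective R (M →₀ S) := .of_equiv (finsuppLequivDFinsupp R).symm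
  exact .of_split (s.restrictScalars R) ((Finsupp.linearCombination S id).restrictScalars R)
    (LinearMap.ext fun x => LinearMap.congr_fun hs x)

section GorensteinDuality

variable {Λ R : Type*} [CommSemiring Λ] [CommSemiring R] [Algebra Λ R]
  {φ : R ≃ₗ[Λ] (R →ₗ[Λ] Λ)} (hφ : ∀ r s x : R, φ (r * s) x = φ s (r * x))
include hφ

theorem apply_eq_one_apply_mul_of_gorenstein (s y : R) : φ s y = φ 1 (s * y) := by
  simpa using hφ s 1 y

variable (X : Type*) [AddCommMonoid X] [Module R X] [Module Λ X] [IsScalarTower Λ R X]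

noncomputable def gorensteinDualEquiv : (X →ₗ[R] R) ≃ₗ[Λ] (X →ₗ[Λ] Λ) where
  toFun f := φ 1 ∘ₗ f.restrictScalars Λ
  map_add' f g := by ext; simp
  map_smul' l f := by ext; simp
  invFun h :=
    { toFun x := φ.symm (h ∘ₗ (LinearMap.toSpanSingleton R X x).restrictScalars Λ)
      map_add' x y := by rw [← map_add]; congr 1; ext; simp
      map_smul' r x := φ.injective <| LinearMap.ext fun y => by
        rw [RingHom.id_apply, smul_eq_mul, hφ, φ.apply_symm_apply, φ.apply_symm_apply]
        simp [mul_comm r y, mul_smul] }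
  left_inv f := by
    ext x
    apply φ.injective
    ext y
    simp [apply_eq_one_apply_mul_of_gorenstein hφ (f x), mul_comm]
  right_inv h := by
    ext x
    dsimp
    rw [← mul_one (φ.symm _), ← apply_eq_one_apply_mul_of_gorenstein hφ, φ.apply_symm_apply]
    simp

end GorensteinDuality

namespace ModuleCat

section

variable {Λ R : Type u} [CommRing Λ] [Ring R] [Algebra Λ R]

instance restrictScalars_isScalarTower (X : ModuleCat.{u} R) :
    IsScalarTower Λ R ((restrictScalars (algebraMap Λ R)).obj X) where
  smul_assoc l r x := by
    rw [restrictScalars.smul_def, Algebra.smul_def, mul_smul]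
    rfl

instance restrictScalars_preservesProjectiveObjects [Module.Projective Λ R] :
    (restrictScalars.{u} (algebraMap Λ R)).PreservesProjectiveObjects where
  projective_obj {X} (_ : Projective X) :=
    have : Module.Projective R ((restrictScalars (algebraMap Λ R)).obj X) :=
      inferInstanceAs (Module.Projective R X)
    have : Module.Projective Λ ((restrictScalars (algebraMap Λ R)).obj X) := .trans (S := R)
    inferInstance

end

noncomputable def restrictScalarsHomEquiv {Λ R : Type u} [CommRing Λ] [CommRing R] [Algebra Λ R]
    (X : ModuleCat.{u} R) :
    (restrictScalars (algebraMap Λ R)).obj (of R (X ⟶ of R R)) ≃ₗ[Λ] (X →ₗ[R] R) where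
  toFun f := f.hom
  invFun := ofHom
  map_add' _ _ := rfl
  map_smul' l f := by ext x; exact (Algebra.smul_def l (f.hom x)).symm
  left_inv _ := rfl
  right_inv _ := rfl

end ModuleCat

section RestrictScalarsExt

variable {Λ R : Type u} [CommRing Λ] [CommRing R] [Algebra Λ R]
  {φ : R ≃ₗ[Λ] (R →ₗ[Λ] Λ)} (hφ : ∀ r s x : R, φ (r * s) x = φ s (r * x))
include hφ

noncomputable def restrictScalarsHomIsoOfGorenstein (X : ModuleCat.{u} R) :
    (ModuleCat.restrictScalars (algebraMap Λ R)).obj (ModuleCat.of R (X ⟶ ModuleCat.of R R)) ≅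
      ModuleCat.of Λ ((ModuleCat.restrictScalars (algebraMap Λ R)).obj X ⟶ ModuleCat.of Λ Λ) :=
  LinearEquiv.toModuleIso <|
    ModuleCat.restrictScalarsHomEquiv X ≪≫ₗ
      -- `(restrictScalars _).obj X` has the carrier and the `R`-action of `X`, up to defeq
      (gorensteinDualEquiv hφ ((ModuleCat.restrictScalars (algebraMap Λ R)).obj X) :
        (X →ₗ[R] R) ≃ₗ[Λ] _) ≪≫ₗ
      (ModuleCat.homLinearEquiv (M := (ModuleCat.restrictScalars (algebraMap Λ R)).obj X)
        (N := ModuleCat.of Λ Λ) (S := Λ)).symm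

noncomputable def linearYonedaObjRestrictScalarsIso {α : Type*} [AddRightCancelSemigroup α]
    [One α] (K : ChainComplex (ModuleCat.{u} R) α) :
    ((ModuleCat.restrictScalars (algebraMap Λ R)).mapHomologicalComplex _).obj
        (K.linearYonedaObj R (ModuleCat.of R R)) ≅
      ChainComplex.linearYonedaObj
        (((ModuleCat.restrictScalars (algebraMap Λ R)).mapHomologicalComplex _).obj K)
        Λ (ModuleCat.of Λ Λ) :=
  HomologicalComplex.Hom.isoOfComponents (fun n => restrictScalarsHomIsoOfGorenstein hφ (K.X n))
    (fun _ _ _ => rfl)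

noncomputable def restrictScalarsExtIso [Module.Projective Λ R] (M : ModuleCat.{u} R) (i : ℕ) :
    (ModuleCat.restrictScalars (algebraMap Λ R)).obj (extMod R i M (ModuleCat.of R R)) ≅
      extMod Λ i ((ModuleCat.restrictScalars (algebraMap Λ R)).obj M) (ModuleCat.of Λ Λ) :=
  let F := ModuleCat.restrictScalars.{u} (algebraMap Λ R)
  let P := projectiveResolution M
  F.mapIso (P.isoExt i _) ≪≫ (ShortComplex.mapHomologyIso _ F).symm ≪≫
    (HomologicalComplex.homologyFunctor _ _ i).mapIso
      (linearYonedaObjRestrictScalarsIso hφ P.complex) ≪≫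
    ((F.mapProjectiveResolution P).isoExt i _).symm

end RestrictScalarsExt

theorem ext_iso_of_relative_gorenstein_general
    (Λ : Type u) [CommRing Λ]
    (R : Type u) [CommRing R] [Algebra Λ R] [Module.Free Λ R]
    (hGor : ∃ φ : R ≃ₗ[Λ] (R →ₗ[Λ] Λ), ∀ r s x : R, φ (r * s) x = φ s (r * x))
    (M : Type u) [AddCommGroup M] [Module R M] (i : ℕ) :
    Nonempty
      ((RestrictScalars Λ R (extMod R i (ModuleCat.of R M) (ModuleCat.of R R))) ≃ₗ[Λ]
        (extMod Λ i (@ModuleCat.of Λ _ (RestrictScalars Λ R M) _ (RestrictScalars.module Λ R M)) (ModuleCat.of Λ Λ))) := by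
  obtain ⟨φ, hφ⟩ := hGor
  -- `RestrictScalars Λ R` and `ModuleCat.restrictScalars` both use `Module.compHom`
  exact ⟨(restrictScalarsExtIso hφ (ModuleCat.of R M) i).toLinearEquiv⟩

/-- If `R` is a `Λ`-algebra, free of finite rank as a `Λ`-module, with
`Hom_Λ(R, Λ) ≅ R` as `R`-modules, then for every `R`-module `M` and every `i ≥ 0` there is an
isomorphism of `Λ`-modules `Ext^i_R(M, R) ≅ Ext^i_Λ(M, Λ)`, where on the right-hand side `M`
is regarded as a `Λ`-module by restriction of scalars. -/
theorem ext_iso_of_relative_gorenstein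
    (Λ : Type u) [CommRing Λ]
    (R : Type u) [CommRing R] [Algebra Λ R] [Module.Free Λ R] [Module.Finite Λ R]
    (hGor : ∃ φ : R ≃ₗ[Λ] (R →ₗ[Λ] Λ), ∀ r s x : R, φ (r * s) x = φ s (r * x))
    (M : Type u) [AddCommGroup M] [Module R M] (i : ℕ) :
    Nonempty
      ((RestrictScalars Λ R (extMod R i (ModuleCat.of R M) (ModuleCat.of R R))) ≃ₗ[Λ]
        (extMod Λ i (@ModuleCat.of Λ _ (RestrictScalars Λ R M) _ (RestrictScalars.module Λ R M)) (ModuleCat.of Λ Λ))) :=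
  ext_iso_of_relative_gorenstein_general Λ R hGor M i
end
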